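/- If A is an isometry on a Hilbert space H, Q is an n-nilpotent operator on H, and AQ = QA, then T = A + Q is a (2n-1)-isometry. -/

import Mathlib

/-!
Since `A` and `Q` commute and `Q ^ n = 0`, `(A + Q) ^ k = ∑_{j<n} C(k,j) A^(k-j) Q^j`, and since
powers of `A` preserve inner products,
`‖(A + Q) ^ k x‖² = ∑_{i,j<n} C(k,i) C(k,j) Re ⟪A^(j-i) Q^i x, A^(i-j) Q^j x⟫`
with coefficients independent of `k`. Thus `k ↦ ‖(A + Q) ^ k x‖²` is a polynomial in `k` of
degree at most `2n - 2`, so its `(2n - 1)`-th forward difference, which is the sum defining a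
`(2n - 1)`-isometry, vanishes.
-/

open scoped BigOperators

/-- `T` is an `m`-isometry: `∑_{k=0}^m (-1)^{m-k} C(m,k) ‖T^k x‖² = 0` for all `x`. -/
def IsMIsometry {H : Type*} [NormedAddCommGroup H] [InnerProductSpace ℂ H]
    (m : ℕ) (T : H →L[ℂ] H) : Prop :=
  ∀ x : H, ∑ k ∈ Finset.range (m + 1),
    (-1 : ℝ) ^ (m - k) * (m.choose k) * ‖(T ^ k) x‖ ^ 2 = 0

open Finset Polynomial
open scoped InnerProductSpace

theorem Polynomial.sum_range_alternating_choose_mul_eval_eq_zero {R : Type*} [CommRing R]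
    {P : R[X]} {m : ℕ} (hP : P.natDegree < m) :
    ∑ k ∈ range (m + 1), (-1 : R) ^ (m - k) * m.choose k * P.eval (k : R) = 0 := by
  have h := congrFun (fwdDiff_iter_eq_zero_of_degree_lt hP) 0
  rw [fwdDiff_iter_eq_sum_shift] at h
  simpa [zsmul_eq_mul] using h

theorem Polynomial.exists_natDegree_le_eval_natCast_eq_choose (K : Type*) [Field K] [CharZero K]
    (i : ℕ) : ∃ p : K[X], p.natDegree ≤ i ∧ ∀ k : ℕ, p.eval (k : K) = k.choose i := by
  refine ⟨C (i.factorial : K)⁻¹ * descPochhammer K i, ?_, fun k => ?_⟩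
  · exact (natDegree_C_mul_le _ _).trans (descPochhammer_natDegree K i).le
  · rw [eval_mul, eval_C, Nat.cast_choose_eq_descPochhammer_div, inv_mul_eq_div]

theorem Polynomial.exists_natDegree_le_eval_natCast_eq_sum_choose_mul_choose {K : Type*}
    [Field K] [CharZero K] (n : ℕ) (c : ℕ → ℕ → K) :
    ∃ P : K[X], P.natDegree ≤ 2 * (n - 1) ∧ ∀ k : ℕ,
      P.eval (k : K) = ∑ i ∈ range n, ∑ j ∈ range n, (k.choose i * k.choose j : K) * c i j := by
  choose p hp_deg hp_eval using exists_natDegree_le_eval_natCast_eq_choose K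
  refine ⟨∑ i ∈ range n, ∑ j ∈ range n, p i * p j * C (c i j), ?_, fun k => ?_⟩
  · refine natDegree_sum_le_of_forall_le _ _ fun i hi =>
      natDegree_sum_le_of_forall_le _ _ fun j hj => ?_
    have hi := mem_range.1 hi
    have hj := mem_range.1 hj
    calc (p i * p j * C (c i j)).natDegree ≤ (p i).natDegree + (p j).natDegree :=
          (natDegree_mul_C_le _ _).trans natDegree_mul_le
      _ ≤ 2 * (n - 1) := by have := hp_deg i; have := hp_deg j; omega
  · simp only [eval_finsetSum, eval_mul, eval_C, hp_eval]

theorem Commute.add_pow_eq_sum_range_of_pow_eq_zero {R : Type*} [Semiring R] {a b : R}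
    (h : Commute a b) {n : ℕ} (hb : b ^ n = 0) (k : ℕ) :
    (a + b) ^ k = ∑ j ∈ range n, k.choose j • (a ^ (k - j) * b ^ j) := by
  set f : ℕ → R := fun j => k.choose j • (a ^ (k - j) * b ^ j)
  have hf : ∀ j, n ≤ j ∨ k < j → f j = 0 := by
    rintro j (hj | hj)
    · simp [f, pow_eq_zero_of_le hj hb]
    · simp [f, Nat.choose_eq_zero_of_lt hj]
  calc (a + b) ^ k = ∑ j ∈ range (k + 1), f j := by
        rw [add_comm, h.symm.add_pow]
        refine sum_congr rfl fun j _ => ?_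
        rw [(h.pow_pow _ _).symm.eq]
        exact (nsmul_eq_mul' _ _).symm
    _ = ∑ j ∈ range (min (k + 1) n), f j :=
        (sum_subset (range_subset_range.2 (min_le_left _ _)) fun j hj hj' => hf j (by
          simp only [mem_range] at hj hj'; omega)).symm
    _ = ∑ j ∈ range n, f j :=
        sum_subset (range_subset_range.2 (min_le_right _ _)) fun j hj hj' => hf j (by
          simp only [mem_range] at hj hj'; omega)

section InnerProduct

variable {𝕜 E : Type*} [RCLike 𝕜] [NormedAddCommGroup E] [InnerProductSpace 𝕜 E]

theorem norm_sum_nsmul_sq {ι : Type*} (s : Finset ι) (c : ι → ℕ) (v : ι → E) :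
    ‖∑ i ∈ s, c i • v i‖ ^ 2 = ∑ i ∈ s, ∑ j ∈ s, (c i * c j : ℝ) * RCLike.re ⟪v i, v j⟫_𝕜 := by
  rw [@norm_sq_eq_re_inner 𝕜, sum_inner, map_sum]
  refine sum_congr rfl fun i _ => ?_
  rw [inner_sum, map_sum]
  refine sum_congr rfl fun j _ => ?_
  rw [← Nat.cast_smul_eq_nsmul 𝕜, ← Nat.cast_smul_eq_nsmul 𝕜, inner_smul_left, inner_smul_right]
  simp [mul_assoc]

variable {A : E →L[𝕜] E}

theorem norm_pow_apply_of_norm_apply (hA : ∀ x, ‖A x‖ = ‖x‖) (s : ℕ) (x : E) :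
    ‖(A ^ s) x‖ = ‖x‖ := by
  induction s with
  | zero => rfl
  | succ s ih => rw [pow_succ', mul_apply_eq_comp, hA, ih]

theorem inner_pow_sub_apply_pow_sub_apply (hA : ∀ x, ‖A x‖ = ‖x‖) {i j k : ℕ} (hi : i ≤ k)
    (hj : j ≤ k) (u v : E) :
    ⟪(A ^ (k - i)) u, (A ^ (k - j)) v⟫_𝕜 = ⟪(A ^ (j - i)) u, (A ^ (i - j)) v⟫_𝕜 := by
  have hki : k - i = (k - max i j) + (j - i) := by omega
  have hkj : k - j = (k - max i j) + (i - j) := by omega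
  rw [hki, hkj, pow_add, pow_add, mul_apply_eq_comp, mul_apply_eq_comp,
    (LinearMap.norm_map_iff_inner_map_map _).1 (norm_pow_apply_of_norm_apply hA _)]

theorem norm_add_pow_apply_sq_of_norm_apply {Q : E →L[𝕜] E} (hA : ∀ x, ‖A x‖ = ‖x‖) {n : ℕ}
    (hQ : Q ^ n = 0) (hcomm : A * Q = Q * A) (x : E) (k : ℕ) :
    ‖((A + Q) ^ k) x‖ ^ 2 = ∑ i ∈ range n, ∑ j ∈ range n, (k.choose i * k.choose j : ℝ) *
      RCLike.re ⟪(A ^ (j - i)) ((Q ^ i) x), (A ^ (i - j)) ((Q ^ j) x)⟫_𝕜 := by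
  simp only [Commute.add_pow_eq_sum_range_of_pow_eq_zero hcomm hQ k,
    _root_.sum_apply, _root_.smul_apply, mul_apply_eq_comp, norm_sum_nsmul_sq (𝕜 := 𝕜)]
  refine sum_congr rfl fun i _ => sum_congr rfl fun j _ => ?_
  by_cases hik : i ≤ k
  · by_cases hjk : j ≤ k
    · rw [inner_pow_sub_apply_pow_sub_apply hA hik hjk]
    · simp [Nat.choose_eq_zero_of_lt (not_le.1 hjk)]
  · simp [Nat.choose_eq_zero_of_lt (not_le.1 hik)]

end InnerProduct

theorem IsMIsometry.of_exists_natDegree_lt {H : Type*} [NormedAddCommGroup H]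
    [InnerProductSpace ℂ H] {m : ℕ} {T : H →L[ℂ] H}
    (h : ∀ x, ∃ P : ℝ[X], P.natDegree < m ∧ ∀ k : ℕ, ‖(T ^ k) x‖ ^ 2 = P.eval (k : ℝ)) :
    IsMIsometry m T := fun x => by
  obtain ⟨P, hP_deg, hP_eval⟩ := h x
  simpa only [hP_eval] using sum_range_alternating_choose_mul_eval_eq_zero hP_deg

theorem stmt1_general {H : Type*} [NormedAddCommGroup H] [InnerProductSpace ℂ H]
    (n : ℕ) (hn : 1 ≤ n) (A Q : H →L[ℂ] H)
    (hA : ∀ x : H, ‖A x‖ = ‖x‖) (hQ : Q ^ n = 0)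
    (hcomm : A * Q = Q * A) :
    IsMIsometry (2 * n - 1) (A + Q) := by
  refine IsMIsometry.of_exists_natDegree_lt fun x => ?_
  obtain ⟨P, hP_deg, hP_eval⟩ := exists_natDegree_le_eval_natCast_eq_sum_choose_mul_choose n
    fun i j => RCLike.re ⟪(A ^ (j - i)) ((Q ^ i) x), (A ^ (i - j)) ((Q ^ j) x)⟫_ℂ
  refine ⟨P, by omega, fun k => ?_⟩
  rw [hP_eval, norm_add_pow_apply_sq_of_norm_apply hA hQ hcomm]

theorem stmt1 {H : Type*} [NormedAddCommGroup H] [InnerProductSpace ℂ H] [CompleteSpace H]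
    (n : ℕ) (hn : 1 ≤ n) (A Q : H →L[ℂ] H)
    (hA : ∀ x : H, ‖A x‖ = ‖x‖) (hQ : Q ^ n = 0) (hQ' : Q ^ (n - 1) ≠ 0)
    (hcomm : A * Q = Q * A) :
    IsMIsometry (2 * n - 1) (A + Q) :=
  stmt1_general n hn A Q hA hQ hcomm
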